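/- arXiv:0808.2686 — 2 statements merged into one kernel-verified Lean document; each statement's English description precedes it below -/
import Mathlib

section
/- Let < be a right-order on a group G, C a subgroup of G, and a ∈ G with a ≠ 1 and C ∩ ⟨a⟩ = {1}. Suppose a normalizes C and conjugation by a and by a⁻¹ preserves the order < on C. Then the subgroup H = ⟨C, a⟩ admits a discrete right-order ≺ with a as minimal positive element, and ≺ agrees with < on C. -/
/-!
Every element of `⟨C, a⟩` is uniquely `a ^ n * c` with `c ∈ C`: existence because `a` normalizes
`C`, uniqueness because `C ∩ ⟨a⟩ = 1` and a right-ordered group is torsion-free. Order `⟨C, a⟩`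
lexicographically, first by the sign of `c` and then by that of `n`: the positive cone
`{a ^ n * c | 1 < c, or c = 1 and 0 < n}` is closed under products since conjugation by powers of
`a` preserves positivity in `C`. Elements `a ^ n` with `n > 1` and `a ^ n * c` with `1 < c` all
exceed `a`, so `a` is the least positive element.
-/

variable {G : Type*} [Group G]

def IsRightOrder (r : G → G → Prop) : Prop :=
  IsStrictTotalOrder G r ∧ ∀ f g h : G, r f g → r (f * h) (g * h)

def LeastPos (r : G → G → Prop) (a : G) : Prop :=
  r 1 a ∧ ∀ g : G, r 1 g → g = a ∨ r a g

namespace IsRightOrder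

variable {r : G → G → Prop}

theorem lt_iff_one_lt_mul_inv (hr : IsRightOrder r) {x y : G} : r x y ↔ r 1 (y * x⁻¹) :=
  ⟨fun h => by simpa using hr.2 x y x⁻¹ h, fun h => by simpa using hr.2 1 (y * x⁻¹) x h⟩

theorem one_lt_mul (hr : IsRightOrder r) {x y : G} (hx : r 1 x) (hy : r 1 y) : r 1 (x * y) :=
  have := hr.1
  _root_.trans hy (by simpa using hr.2 1 x y hx)

theorem one_lt_inv (hr : IsRightOrder r) {x : G} (hx : r x 1) : r 1 x⁻¹ := by
  simpa using hr.2 x 1 x⁻¹ hx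

theorem one_lt_pow_succ (hr : IsRightOrder r) {g : G} (hg : r 1 g) (n : ℕ) : r 1 (g ^ (n + 1)) := by
  induction n with
  | zero => simpa using hg
  | succ n ih => rw [pow_succ]; exact hr.one_lt_mul ih hg

theorem zpow_ne_one (hr : IsRightOrder r) {g : G} (hg : g ≠ 1) {n : ℤ} (hn : n ≠ 0) :
    g ^ n ≠ 1 := by
  have := hr.1
  wlog hpos : r 1 g generalizing g
  · have hlt : r g 1 := (trichotomous_of r 1 g).resolve_left hpos |>.resolve_left hg.symm
    simpa using this (inv_ne_one.mpr hg) (hr.one_lt_inv hlt)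
  wlog hn' : 0 < n generalizing n
  · simpa using this (n := -n) (by omega) (by omega)
  obtain ⟨k, rfl⟩ : ∃ k : ℕ, n = (k + 1 : ℕ) := ⟨n.toNat - 1, by omega⟩
  intro h
  rw [zpow_natCast] at h
  exact irrefl_of r 1 (h ▸ hr.one_lt_pow_succ hpos k)

theorem of_cone {K : Type*} [Group K] (P : K → Prop) (h1 : ¬ P 1)
    (hmul : ∀ x y, P x → P y → P (x * y)) (htot : ∀ g ≠ 1, P g ∨ P g⁻¹) :
    IsRightOrder fun x y : K => P (y * x⁻¹) := by
  refine ⟨{ trichotomous := fun x y hxy hyx => ?_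
            irrefl := fun x => ?_
            trans := fun x y z => ?_ },
    fun x y z h => by simpa [mul_assoc] using h⟩
  · by_contra hne
    refine (htot (y * x⁻¹) (mul_inv_eq_one.not.mpr (Ne.symm hne))).elim hxy fun h => hyx ?_
    simpa using h
  · simpa using h1
  · intro hxy hyz
    simpa [mul_assoc] using hmul _ _ hyz hxy

end IsRightOrder

theorem leastPos_of_cone {K : Type*} [Group K] {P : K → Prop} {b : K} (hb : P b)
    (hnext : ∀ g, P g → g = b ∨ P (g * b⁻¹)) : LeastPos (fun x y : K => P (y * x⁻¹)) b :=
  ⟨by simpa using hb, fun g hg => hnext g (by simpa using hg)⟩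

theorem conj_zpow_iff {a : G} {p : G → Prop} (hp : ∀ x, p (a * x * a⁻¹) ↔ p x) (m : ℤ) (x : G) :
    p (a ^ m * x * a ^ (-m)) ↔ p x := by
  induction m using Int.induction_on generalizing x with
  | zero => simp
  | succ k ih =>
    have e : a ^ ((k : ℤ) + 1) * x * a ^ (-((k : ℤ) + 1)) =
        a * (a ^ (k : ℤ) * x * a ^ (-(k : ℤ))) * a⁻¹ := by
      group
    rw [e, hp, ih]
  | pred k ih =>
    have e : a * (a ^ (-(k : ℤ) - 1) * x * a ^ (-(-(k : ℤ) - 1))) * a⁻¹ =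
        a ^ (-(k : ℤ)) * x * a ^ (-(-(k : ℤ))) := by
      group
    rw [← hp, e, ih]

section Extension

variable {r : G → G → Prop} {C : Subgroup G} {a : G}

open Subgroup

theorem mem_normalizer_of_conj_mem (hnorm : ∀ c ∈ C, a * c * a⁻¹ ∈ C)
    (hnorm' : ∀ c ∈ C, a⁻¹ * c * a ∈ C) : a ∈ normalizer (C : Set G) :=
  mem_normalizer_iff.mpr fun c => ⟨hnorm c, fun h => by simpa [mul_assoc] using hnorm' _ h⟩

theorem conj_zpow_mem (ha : a ∈ normalizer (C : Set G)) (m : ℤ) {c : G} (hc : c ∈ C) :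
    a ^ m * c * a ^ (-m) ∈ C := by
  rw [zpow_neg]
  exact (mem_normalizer_iff.mp (zpow_mem ha m) c).mp hc

theorem one_lt_conj_zpow_iff (ha : a ∈ normalizer (C : Set G))
    (hconj : ∀ c ∈ C, ∀ c' ∈ C, (r c c' ↔ r (a * c * a⁻¹) (a * c' * a⁻¹)))
    (m : ℤ) {c : G} (hc : c ∈ C) : r 1 (a ^ m * c * a ^ (-m)) ↔ r 1 c := by
  have key (x : G) : (a * x * a⁻¹ ∈ C ∧ r 1 (a * x * a⁻¹)) ↔ (x ∈ C ∧ r 1 x) := by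
    rw [← mem_normalizer_iff.mp ha x]
    exact and_congr_right fun hx => by simpa using (hconj 1 C.one_mem x hx).symm
  simpa only [conj_zpow_mem ha m hc, hc, true_and] using
    conj_zpow_iff (p := fun x => x ∈ C ∧ r 1 x) key m c

theorem exists_zpow_mul_of_mem_sup (ha : a ∈ normalizer (C : Set G)) {g : G}
    (hg : g ∈ C ⊔ zpowers a) : ∃ n : ℤ, ∃ c ∈ C, g = a ^ n * c := by
  rw [sup_comm, ← SetLike.mem_coe,
    coe_mul_of_left_le_normalizer_right _ _ (zpowers_le.mpr ha)] at hg
  obtain ⟨_, ⟨n, rfl⟩, c, hc, rfl⟩ := hg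
  exact ⟨n, c, hc, rfl⟩

theorem eq_and_eq_of_zpow_mul_eq (hfree : ∀ n : ℤ, a ^ n ∈ C → n = 0) {n m : ℤ} {c c' : G}
    (hc : c ∈ C) (hc' : c' ∈ C) (h : a ^ n * c = a ^ m * c') : n = m ∧ c = c' := by
  have hpow : a ^ (n - m) = c' * c⁻¹ := by
    rw [sub_eq_neg_add, zpow_add, eq_mul_inv_iff_mul_eq, mul_assoc, h]
    group
  obtain rfl : n = m := by
    have := hfree _ (hpow ▸ C.mul_mem hc' (C.inv_mem hc))
    omega
  exact ⟨rfl, mul_left_cancel h⟩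

end Extension

def lexCone (r : G → G → Prop) (C : Subgroup G) (a : G) (g : G) : Prop :=
  ∃ n : ℤ, ∃ c ∈ C, g = a ^ n * c ∧ (r 1 c ∨ c = 1 ∧ 0 < n)

section LexCone

variable {r : G → G → Prop} {C : Subgroup G} {a : G}

theorem lexCone_zpow_mul_of_one_lt (n : ℤ) {c : G} (hc : c ∈ C) (h : r 1 c) :
    lexCone r C a (a ^ n * c) :=
  ⟨n, c, hc, rfl, Or.inl h⟩

theorem lexCone_zpow (n : ℤ) (hn : 0 < n) : lexCone r C a (a ^ n) :=
  ⟨n, 1, C.one_mem, (mul_one _).symm, Or.inr ⟨rfl, hn⟩⟩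

theorem lexCone_iff_of_mem (hfree : ∀ n : ℤ, a ^ n ∈ C → n = 0) {c : G} (hc : c ∈ C) :
    lexCone r C a c ↔ r 1 c := by
  refine ⟨fun ⟨n, d, hd, h, hpos⟩ => ?_, fun h => by simpa using lexCone_zpow_mul_of_one_lt 0 hc h⟩
  obtain ⟨rfl, rfl⟩ := eq_and_eq_of_zpow_mul_eq (m := 0) hfree hd hc (h.symm.trans (by simp))
  exact hpos.resolve_right fun h => h.2.false

theorem not_lexCone_one (hr : IsRightOrder r) (hfree : ∀ n : ℤ, a ^ n ∈ C → n = 0) :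
    ¬ lexCone r C a 1 := by
  have := hr.1
  simpa [lexCone_iff_of_mem hfree C.one_mem] using irrefl_of r 1

theorem lexCone_mul (hr : IsRightOrder r) (hC : ∀ m : ℤ, ∀ c ∈ C, a ^ m * c * a ^ (-m) ∈ C)
    (hpos : ∀ m : ℤ, ∀ c ∈ C, r 1 c → r 1 (a ^ m * c * a ^ (-m))) {x y : G}
    (hx : lexCone r C a x) (hy : lexCone r C a y) : lexCone r C a (x * y) := by
  obtain ⟨n, c, hc, rfl, hc1⟩ := hx
  obtain ⟨m, d, hd, rfl, hd1⟩ := hy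
  have e : a ^ n * c * (a ^ m * d) = a ^ (n + m) * ((a ^ (-m) * c * a ^ (-(-m))) * d) := by
    rw [zpow_add]; group
  rw [e]
  refine ⟨n + m, _, C.mul_mem (hC (-m) c hc) hd, rfl, ?_⟩
  rcases hc1 with hc1 | ⟨rfl, hn⟩ <;> rcases hd1 with hd1 | ⟨rfl, hm⟩
  · exact Or.inl (hr.one_lt_mul (hpos (-m) c hc hc1) hd1)
  · exact Or.inl (by simpa using hpos (-m) c hc hc1)
  · exact Or.inl (by simpa using hd1)
  · exact Or.inr ⟨by simp, by omega⟩

theorem lexCone_or_lexCone_inv (hr : IsRightOrder r)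
    (hC : ∀ m : ℤ, ∀ c ∈ C, a ^ m * c * a ^ (-m) ∈ C)
    (hpos : ∀ m : ℤ, ∀ c ∈ C, r 1 c → r 1 (a ^ m * c * a ^ (-m))) (n : ℤ) {c : G} (hc : c ∈ C)
    (hne : a ^ n * c ≠ 1) : lexCone r C a (a ^ n * c) ∨ lexCone r C a (a ^ n * c)⁻¹ := by
  have := hr.1
  rcases trichotomous_of r 1 c with h | rfl | h
  · exact Or.inl (lexCone_zpow_mul_of_one_lt n hc h)
  · have hn : n ≠ 0 := by rintro rfl; simp at hne
    rcases hn.lt_or_gt with hn | hn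
    · exact Or.inr (by simpa using lexCone_zpow (r := r) (C := C) (-n) (by omega))
    · exact Or.inl (by simpa using lexCone_zpow (r := r) (C := C) n hn)
  · have e : (a ^ n * c)⁻¹ = a ^ (-n) * (a ^ n * c⁻¹ * a ^ (-n)) := by group
    exact Or.inr (e ▸ lexCone_zpow_mul_of_one_lt (-n) (hC n _ (C.inv_mem hc))
      (hpos n _ (C.inv_mem hc) (hr.one_lt_inv h)))

theorem eq_or_lexCone_mul_inv (hC : ∀ m : ℤ, ∀ c ∈ C, a ^ m * c * a ^ (-m) ∈ C)
    (hpos : ∀ m : ℤ, ∀ c ∈ C, r 1 c → r 1 (a ^ m * c * a ^ (-m))) {g : G}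
    (hg : lexCone r C a g) : g = a ∨ lexCone r C a (g * a⁻¹) := by
  obtain ⟨n, c, hc, rfl, hc1 | ⟨rfl, hn⟩⟩ := hg
  · have e : a ^ n * c * a⁻¹ = a ^ (n - 1) * (a ^ (1 : ℤ) * c * a ^ (-1 : ℤ)) := by
      rw [zpow_sub_one]; group
    exact Or.inr (e ▸ lexCone_zpow_mul_of_one_lt _ (hC 1 c hc) (hpos 1 c hc hc1))
  · rcases eq_or_ne n 1 with rfl | hn1
    · simp
    · exact Or.inr <| by
        simpa [← zpow_sub_one] using lexCone_zpow (r := r) (C := C) (n - 1) (by omega)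

end LexCone

theorem stmt10_general (r : G → G → Prop) (hr : IsRightOrder r)
    (C : Subgroup G) (a : G) (ha : a ≠ 1)
    (hint : C ⊓ Subgroup.zpowers a = ⊥)
    (hnorm : ∀ c ∈ C, a * c * a⁻¹ ∈ C)
    (hnorm' : ∀ c ∈ C, a⁻¹ * c * a ∈ C)
    (hconj : ∀ c ∈ C, ∀ c' ∈ C, (r c c' ↔ r (a * c * a⁻¹) (a * c' * a⁻¹))) :
    ∃ s : (C ⊔ Subgroup.zpowers a : Subgroup G) → (C ⊔ Subgroup.zpowers a : Subgroup G) → Prop,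
      IsRightOrder s ∧
      LeastPos s ⟨a, Subgroup.mem_sup_right (Subgroup.mem_zpowers a)⟩ ∧
      ∀ (c c' : G) (hc : c ∈ C) (hc' : c' ∈ C),
        (s ⟨c, Subgroup.mem_sup_left hc⟩ ⟨c', Subgroup.mem_sup_left hc'⟩ ↔ r c c') := by
  have hN := mem_normalizer_of_conj_mem hnorm hnorm'
  have hC (m : ℤ) (c : G) : c ∈ C → _ := conj_zpow_mem hN m
  have hpos (m : ℤ) (c : G) (hc : c ∈ C) := (one_lt_conj_zpow_iff hN hconj m hc).2
  have hfree (n : ℤ) (hn : a ^ n ∈ C) : n = 0 := by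
    by_contra h0
    refine hr.zpow_ne_one ha h0 ?_
    simpa [hint] using Subgroup.mem_inf.mpr ⟨hn, Subgroup.zpow_mem_zpowers a n⟩
  let P (x : ↥(C ⊔ Subgroup.zpowers a)) : Prop := lexCone r C a x
  refine ⟨fun x y => P (y * x⁻¹),
    IsRightOrder.of_cone P (not_lexCone_one hr hfree) (fun _ _ => lexCone_mul hr hC hpos)
      fun g hg => ?_,
    leastPos_of_cone (by simpa [P] using lexCone_zpow 1 one_pos)
      fun g hg => (eq_or_lexCone_mul_inv hC hpos hg).imp Subtype.ext id,
    fun c c' hc hc' => (lexCone_iff_of_mem hfree (C.mul_mem hc' (C.inv_mem hc))).trans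
      hr.lt_iff_one_lt_mul_inv.symm⟩
  obtain ⟨n, c, hc, hgc⟩ := exists_zpow_mul_of_mem_sup hN g.2
  have hne : a ^ n * c ≠ 1 := hgc ▸ (OneMemClass.coe_eq_one.not.mpr hg)
  simpa only [P, Subgroup.coe_inv, hgc] using lexCone_or_lexCone_inv hr hC hpos n hc hne

theorem stmt10 (r : G → G → Prop) (hr : IsRightOrder r)
    (C : Subgroup G) (a : G) (ha : a ≠ 1)
    (hint : C ⊓ Subgroup.zpowers a = ⊥)
    (hnorm : ∀ c ∈ C, a * c * a⁻¹ ∈ C)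
    (hnorm' : ∀ c ∈ C, a⁻¹ * c * a ∈ C)
    (hconj : ∀ c ∈ C, ∀ c' ∈ C, (r c c' ↔ r (a * c * a⁻¹) (a * c' * a⁻¹)))
    (hconj' : ∀ c ∈ C, ∀ c' ∈ C, (r c c' ↔ r (a⁻¹ * c * a) (a⁻¹ * c' * a))) :
    ∃ s : (C ⊔ Subgroup.zpowers a : Subgroup G) → (C ⊔ Subgroup.zpowers a : Subgroup G) → Prop,
      IsRightOrder s ∧
      LeastPos s ⟨a, Subgroup.mem_sup_right (Subgroup.mem_zpowers a)⟩ ∧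
      ∀ (c c' : G) (hc : c ∈ C) (hc' : c' ∈ C),
        (s ⟨c, Subgroup.mem_sup_left hc⟩ ⟨c', Subgroup.mem_sup_left hc'⟩ ↔ r c c') :=
  stmt10_general r hr C a ha hint hnorm hnorm' hconj
end

section
/- Let G be a right-ordered group, H a convex subgroup of G, and < any right-order on H. Then there exists a right-order on G whose restriction to H is <, and under which H is still convex. -/
variable {G : Type*} [Group G]

/-!
A right order `r` is determined by its positive cone `{g | r 1 g}`, since `r x y ↔ r 1 (y * x⁻¹)`,
and any subset `P` of `G` that is closed under multiplication, avoids `1` and contains `g` or `g⁻¹`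
for each `g ≠ 1` is the positive cone of the right order `y * x⁻¹ ∈ P`. Replacing the part of the
positive cone of `G` lying in `H` by the positive cone of the given order on `H` yields such a set:
by convexity, an element `g ∉ H` lies on the same side of every element of `H`, so multiplying `g`
on either side by an element of `H` does not change its sign.
-/

structure IsTotalCone (P : Set G) : Prop where
  one_notMem : (1 : G) ∉ P
  mul_mem {a b : G} : a ∈ P → b ∈ P → a * b ∈ P
  mem_or_inv_mem {g : G} : g ≠ 1 → g ∈ P ∨ g⁻¹ ∈ P

def coneOrder (P : Set G) (x y : G) : Prop :=
  y * x⁻¹ ∈ P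

def positiveCone (r : G → G → Prop) : Set G :=
  {g | r 1 g}

theorem mem_positiveCone {r : G → G → Prop} {g : G} : g ∈ positiveCone r ↔ r 1 g :=
  Iff.rfl

def IsConvexFor (r : G → G → Prop) (S : Set G) : Prop :=
  ∀ x y z : G, x ∈ S → z ∈ S → r x y → r y z → y ∈ S

def Subgroup.extendCone (H : Subgroup G) (P : Set G) (Q : Set H) : Set G :=
  P \ H ∪ (↑) '' Q

theorem IsTotalCone.isRightOrder_coneOrder {P : Set G} (hP : IsTotalCone P) :
    IsRightOrder (coneOrder P) := by
  refine ⟨{ trichotomous := ?_, irrefl := ?_, trans := ?_ }, ?_⟩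
  · intro a b hab hba
    by_contra hne
    have : b * a⁻¹ ≠ 1 := mul_inv_eq_one.not.mpr (Ne.symm hne)
    rcases hP.mem_or_inv_mem this with h | h
    · exact hab h
    · exact hba (show a * b⁻¹ ∈ P by simpa using h)
  · intro a
    simpa [coneOrder] using hP.one_notMem
  · intro a b c hab hbc
    simpa [coneOrder, mul_assoc] using hP.mul_mem hbc hab
  · intro f g h hfg
    simpa [coneOrder, mul_assoc] using hfg

namespace IsRightOrder

variable {r : G → G → Prop}

theorem irrefl (hr : IsRightOrder r) (a : G) : ¬ r a a :=
  hr.1.irrefl a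

theorem trans (hr : IsRightOrder r) {a b c : G} : r a b → r b c → r a c :=
  hr.1.trans a b c

theorem trichotomous (hr : IsRightOrder r) (a b : G) : r a b ∨ a = b ∨ r b a := by
  have := hr.1
  exact trichotomous_of r a b

theorem mul_right_iff (hr : IsRightOrder r) {a b : G} (c : G) : r (a * c) (b * c) ↔ r a b :=
  ⟨fun h => by simpa using hr.2 _ _ c⁻¹ h, hr.2 a b c⟩

theorem one_rel_mul_iff (hr : IsRightOrder r) {a b : G} : r 1 (a * b) ↔ r b⁻¹ a := by
  rw [← hr.mul_right_iff (a := b⁻¹) (b := a) b, inv_mul_cancel]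

theorem rel_iff_one_rel_mul_inv (hr : IsRightOrder r) {a b : G} : r a b ↔ r 1 (b * a⁻¹) := by
  rw [hr.one_rel_mul_iff, inv_inv]

theorem isTotalCone_positiveCone (hr : IsRightOrder r) : IsTotalCone (positiveCone r) where
  one_notMem := hr.irrefl 1
  mul_mem {a b} ha hb := hr.trans hb (by simpa using hr.2 1 a b ha)
  mem_or_inv_mem {g} hg := by
    rcases hr.trichotomous 1 g with h | h | h
    · exact .inl h
    · exact absurd h.symm hg
    · exact .inr (show r 1 g⁻¹ by simpa using hr.2 g 1 g⁻¹ h)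

end IsRightOrder

namespace IsConvexFor

variable {r : G → G → Prop} {S : Set G}

theorem rel_iff_rel_left (hS : IsConvexFor r S) (hr : IsRightOrder r) {g h h' : G} (hg : g ∉ S)
    (hh : h ∈ S) (hh' : h' ∈ S) : r h g ↔ r h' g := by
  suffices key : ∀ {h h'}, h ∈ S → h' ∈ S → r h g → r h' g from ⟨key hh hh', key hh' hh⟩
  intro h h' hh hh' hhg
  rcases hr.trichotomous h' g with h' | rfl | hgh'
  · exact h'
  · exact absurd hh' hg
  · exact absurd (hS h g h' hh hh' hhg hgh') hg

theorem rel_iff_rel_right (hS : IsConvexFor r S) (hr : IsRightOrder r) {g h h' : G} (hg : g ∉ S)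
    (hh : h ∈ S) (hh' : h' ∈ S) : r g h ↔ r g h' := by
  suffices key : ∀ {h h'}, h ∈ S → h' ∈ S → r g h → r g h' from ⟨key hh hh', key hh' hh⟩
  intro h h' hh hh' hgh
  rcases hr.trichotomous g h' with hgh' | rfl | hh'g
  · exact hgh'
  · exact absurd hh' hg
  · exact absurd (hS h' g h hh' hh hh'g hgh) hg

theorem one_rel_mul_right_iff {H : Subgroup G} (hH : IsConvexFor r H) (hr : IsRightOrder r)
    {g h : G} (hg : g ∉ H) (hh : h ∈ H) : r 1 (g * h) ↔ r 1 g := by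
  rw [hr.one_rel_mul_iff]
  exact hH.rel_iff_rel_left hr hg (H.inv_mem hh) H.one_mem

theorem one_rel_mul_left_iff {H : Subgroup G} (hH : IsConvexFor r H) (hr : IsRightOrder r)
    {g h : G} (hg : g ∉ H) (hh : h ∈ H) : r 1 (h * g) ↔ r 1 g :=
  calc r 1 (h * g) ↔ r g⁻¹ h := hr.one_rel_mul_iff
    _ ↔ r g⁻¹ 1 := hH.rel_iff_rel_right hr (H.inv_mem_iff.not.mpr hg) hh H.one_mem
    _ ↔ r 1 g := by simpa using (hr.one_rel_mul_iff (a := 1) (b := g)).symm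

end IsConvexFor

namespace Subgroup

variable {H : Subgroup G} {P : Set G} {Q : Set H}

theorem mem_extendCone_of_notMem {g : G} (hg : g ∉ H) : g ∈ H.extendCone P Q ↔ g ∈ P := by
  simp [extendCone, hg]

theorem coe_mem_extendCone {k : H} : (k : G) ∈ H.extendCone P Q ↔ k ∈ Q := by
  simp [extendCone]

theorem isTotalCone_extendCone (hP : IsTotalCone P) (hQ : IsTotalCone Q)
    (hright : ∀ g ∉ H, ∀ h ∈ H, g * h ∈ P ↔ g ∈ P)
    (hleft : ∀ g ∉ H, ∀ h ∈ H, h * g ∈ P ↔ g ∈ P) : IsTotalCone (H.extendCone P Q) where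
  one_notMem := by
    have := (coe_mem_extendCone (P := P) (k := 1)).not.mpr hQ.one_notMem
    rwa [H.coe_one] at this
  mul_mem {a b} ha hb := by
    rcases ha with ⟨haP, haH⟩ | ⟨k, hk, rfl⟩ <;> rcases hb with ⟨hbP, hbH⟩ | ⟨k', hk', rfl⟩
    · refine .inl ⟨hP.mul_mem haP hbP, fun habH => ?_⟩
      -- `a⁻¹ * (a * b) = b` would put `a⁻¹` into `P` along with `a`
      have hainv : a⁻¹ ∈ P := by
        simpa using (hright a⁻¹ (H.inv_mem_iff.not.mpr haH) _ habH).mp (by simpa using hbP)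
      exact hP.one_notMem (by simpa using hP.mul_mem haP hainv)
    · exact .inl ⟨(hright a haH k' k'.2).mpr haP, fun h => haH (by simpa using H.mul_mem h k'⁻¹.2)⟩
    · exact .inl ⟨(hleft b hbH k k.2).mpr hbP, fun h => hbH (by simpa using H.mul_mem k⁻¹.2 h)⟩
    · exact .inr ⟨k * k', hQ.mul_mem hk hk', rfl⟩
  mem_or_inv_mem {g} hg := by
    by_cases hgH : g ∈ H
    · have hk : (⟨g, hgH⟩ : H) ≠ 1 := fun h => hg (congrArg Subtype.val h)
      rcases hQ.mem_or_inv_mem hk with h | h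
      · exact .inl (coe_mem_extendCone.mpr h)
      · exact .inr (coe_mem_extendCone.mpr h)
    · have hginv : g⁻¹ ∉ H := H.inv_mem_iff.not.mpr hgH
      rcases hP.mem_or_inv_mem hg with h | h
      · exact .inl ((mem_extendCone_of_notMem hgH).mpr h)
      · exact .inr ((mem_extendCone_of_notMem hginv).mpr h)

theorem coneOrder_extendCone_iff_of_notMem {r : G → G → Prop} (hr : IsRightOrder r) {x y : G}
    (hyx : y * x⁻¹ ∉ H) : coneOrder (H.extendCone (positiveCone r) Q) x y ↔ r x y := by
  rw [coneOrder, mem_extendCone_of_notMem hyx, mem_positiveCone, ← hr.rel_iff_one_rel_mul_inv]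

theorem coneOrder_extendCone_coe_iff {s : H → H → Prop} (hs : IsRightOrder s) (k k' : H) :
    coneOrder (H.extendCone P (positiveCone s)) k k' ↔ s k k' := by
  rw [hs.rel_iff_one_rel_mul_inv]
  exact coe_mem_extendCone (k := k' * k⁻¹)

end Subgroup

theorem stmt16 (r : G → G → Prop) (hr : IsRightOrder r) (H : Subgroup G)
    (hconv : ∀ x y z : G, x ∈ H → z ∈ H → r x y → r y z → y ∈ H)
    (s : H → H → Prop) (hs : IsRightOrder s) :
    ∃ t : G → G → Prop, IsRightOrder t ∧
      (∀ h h' : H, t h h' ↔ s h h') ∧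
      (∀ x y z : G, x ∈ H → z ∈ H → t x y → t y z → y ∈ H) := by
  have hH : IsConvexFor r H := hconv
  set P := H.extendCone (positiveCone r) (positiveCone s)
  have hP : IsTotalCone P :=
    Subgroup.isTotalCone_extendCone hr.isTotalCone_positiveCone hs.isTotalCone_positiveCone
      (fun _ hg _ hh => hH.one_rel_mul_right_iff hr hg hh)
      (fun _ hg _ hh => hH.one_rel_mul_left_iff hr hg hh)
  refine ⟨coneOrder P, hP.isRightOrder_coneOrder, Subgroup.coneOrder_extendCone_coe_iff hs,
    fun x y z hx hz hxy hyz => ?_⟩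
  by_contra hy
  have hyx : y * x⁻¹ ∉ H := fun h => hy (by simpa using H.mul_mem h hx)
  have hzy : z * y⁻¹ ∉ H := fun h => hy (by simpa using H.mul_mem (H.inv_mem h) hz)
  rw [Subgroup.coneOrder_extendCone_iff_of_notMem hr hyx] at hxy
  rw [Subgroup.coneOrder_extendCone_iff_of_notMem hr hzy] at hyz
  exact hy (hH x y z hx hz hxy hyz)
end
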